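/- arXiv:2307.13253 — 3 statements merged into one kernel-verified Lean document; each statement's English description precedes it below -/
import Mathlib

section
/- Assume p ≥ 2. There exist constants C₁, C₂ > 0, depending only on p and n, such that for every κ ≥ 0 and all matrices A, B ∈ ℝ^{n×n} it holds that |A − B|^p ≤ C₁·|V(A) − V(B)|² and |V(A) − V(B)|² ≤ C₂·|S(A) − S(B)|^{p'}. -/
open scoped BigOperators
open Real

/-- Frobenius inner product `A : B = ∑ᵢⱼ Aᵢⱼ Bᵢⱼ` on `n × n` real matrices. -/
noncomputable def fdot {n : ℕ} (A B : Matrix (Fin n) (Fin n) ℝ) : ℝ :=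
  ∑ i, ∑ j, A i j * B i j

/-- Frobenius norm `|A| = (∑ᵢⱼ Aᵢⱼ²)^{1/2}` on `n × n` real matrices. -/
noncomputable def fnorm {n : ℕ} (A : Matrix (Fin n) (Fin n) ℝ) : ℝ :=
  Real.sqrt (∑ i, ∑ j, (A i j) ^ 2)

/-- `S(A) = (κ + |A|)^{p-2} A`. -/
noncomputable def Smap {n : ℕ} (p κ : ℝ) (A : Matrix (Fin n) (Fin n) ℝ) :
    Matrix (Fin n) (Fin n) ℝ :=
  ((κ + fnorm A) ^ (p - 2)) • A

/-- `V(A) = (κ + |A|)^{(p-2)/2} A`. -/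
noncomputable def Vmap {n : ℕ} (p κ : ℝ) (A : Matrix (Fin n) (Fin n) ℝ) :
    Matrix (Fin n) (Fin n) ℝ :=
  ((κ + fnorm A) ^ ((p - 2) / 2)) • A


lemma bern_aux {r θ : ℝ} (hr : 0 ≤ r) (hθ0 : 0 ≤ θ) (hθ1 : θ ≤ 1) :
    1 - θ ^ r ≤ (max r 1) * (1 - θ) := by
  rcases le_total r 1 with h | h
  · rw [max_eq_right h]
    rcases eq_or_lt_of_le hθ0 with h0 | h0
    · have : (0:ℝ) ≤ θ ^ r := rpow_nonneg hθ0 r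
      nlinarith
    · have hθr : θ ≤ θ ^ r := by
        calc θ = θ ^ (1:ℝ) := (rpow_one θ).symm
        _ ≤ θ ^ r := rpow_le_rpow_of_exponent_ge h0 hθ1 h
      linarith
  · rw [max_eq_left h]
    have hb := one_add_mul_self_le_rpow_one_add (by linarith : (-1:ℝ) ≤ θ - 1) h
    have heq : (1 + (θ - 1)) = θ := by ring
    rw [heq] at hb
    nlinarith

lemma scalar_low {r κ a b : ℝ} (hr : 0 ≤ r) (hκ : 0 ≤ κ) (hb : 0 ≤ b) (hab : b ≤ a) :
    (κ+a)^r * (a-b) ≤ (κ+a)^r * a - (κ+b)^r * b := by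
  have h1 : (κ+b)^r ≤ (κ+a)^r := rpow_le_rpow (by linarith) (by linarith) hr
  nlinarith [mul_nonneg (sub_nonneg.2 h1) hb]

lemma scalar_up {r κ a b : ℝ} (hr : 0 ≤ r) (hκ : 0 ≤ κ) (hb : 0 ≤ b) (hab : b ≤ a) :
    (κ+a)^r * a - (κ+b)^r * b ≤ (max r 1 + 1) * ((κ+a)^r * (a-b)) := by
  have hx0 : 0 ≤ κ + a := by linarith
  rcases eq_or_lt_of_le hx0 with hx | hx
  · have ha0 : a = 0 := by linarith
    have hb0 : b = 0 := by linarith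
    simp [ha0, hb0]
  · have hy0 : (0:ℝ) ≤ κ + b := by linarith
    have hyx : κ + b ≤ κ + a := by linarith
    have hθ : (κ+b) / (κ+a) ≤ 1 := by rw [div_le_one hx]; exact hyx
    have hθ0 : 0 ≤ (κ+b) / (κ+a) := div_nonneg hy0 hx.le
    have hB := bern_aux hr hθ0 hθ
    rw [div_rpow hy0 hx.le] at hB
    have hxr : 0 < (κ+a) ^ r := rpow_pos_of_pos hx r
    have key : ((κ+a)^r - (κ+b)^r) * (κ+a) ≤ (max r 1) * ((κ+a)^r * (a - b)) := by
      have h3 : (κ+a)^r * (1 - (κ+b)^r / (κ+a)^r) ≤ (κ+a)^r * ((max r 1) * (1 - (κ+b)/(κ+a))) :=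
        mul_le_mul_of_nonneg_left hB hxr.le
      have h2 : (κ+a)^r * (1 - (κ+b)^r / (κ+a)^r) = (κ+a)^r - (κ+b)^r := by field_simp
      rw [h2] at h3
      have h5 := mul_le_mul_of_nonneg_right h3 hx.le
      have h4 : (κ+a)^r * ((max r 1) * (1 - (κ+b)/(κ+a))) * (κ+a)
          = (max r 1) * ((κ+a)^r * (a - b)) := by field_simp; ring
      calc ((κ+a)^r - (κ+b)^r) * (κ+a) ≤ _ := h5
        _ = (max r 1) * ((κ+a)^r * (a - b)) := h4
    have hyrle : (κ+b)^r ≤ (κ+a)^r := rpow_le_rpow hy0 hyx hr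
    have h6 : ((κ+a)^r - (κ+b)^r) * a ≤ ((κ+a)^r - (κ+b)^r) * (κ+a) :=
      mul_le_mul_of_nonneg_left (by linarith) (sub_nonneg.2 hyrle)
    have h7 : (κ+b)^r * (a-b) ≤ (κ+a)^r * (a-b) :=
      mul_le_mul_of_nonneg_right hyrle (by linarith)
    nlinarith [h6, h7, key]

open Real

section
variable {p κ a b c : ℝ}

lemma fact_half (hp2 : 2 ≤ p) (hκ : 0 ≤ κ) (hb : 0 ≤ b) (hab : b ≤ a) :
    2^(2-p) * (κ+a+b)^(p-2) ≤ (κ+a)^(p-2) := by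
  have h1 : ((κ+a+b)/2 : ℝ) ≤ κ + a := by linarith
  have h3 := rpow_le_rpow (by linarith : (0:ℝ) ≤ (κ+a+b)/2) h1 (by linarith : (0:ℝ) ≤ p - 2)
  rw [div_rpow (by linarith) (by norm_num)] at h3
  rw [show (2:ℝ)-p = -(p-2) by ring, rpow_neg (by norm_num), inv_mul_eq_div]
  exact h3

lemma fact_gagb (hp2 : 2 ≤ p) (hκ : 0 ≤ κ) (hb : 0 ≤ b) (hab : b ≤ a) :
    (κ+a)^((p-2)/2) * (κ+b)^((p-2)/2) ≤ (κ+a+b)^(p-2) := by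
  have hq : (0:ℝ) ≤ (p-2)/2 := by linarith
  have h1 : (κ+a)*(κ+b) ≤ (κ+a+b)^(2:ℕ) := by nlinarith
  rw [← mul_rpow (by linarith) (by linarith)]
  calc ((κ+a)*(κ+b))^((p-2)/2) ≤ ((κ+a+b)^(2:ℕ))^((p-2)/2) :=
        rpow_le_rpow (by nlinarith) h1 hq
    _ = (κ+a+b)^(p-2) := by
        rw [← rpow_natCast (κ+a+b) 2, ← rpow_mul (by linarith)]
        norm_num
        rw [show 2*((p-2)/2) = p-2 by ring]

lemma fact_gsq (hp2 : 2 ≤ p) (h : 0 ≤ κ + a) :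
    ((κ+a)^((p-2)/2))^(2:ℕ) = (κ+a)^(p-2) := by
  rw [← rpow_natCast ((κ+a)^((p-2)/2)) 2, ← rpow_mul h]
  norm_num

end

section
variable {p κ a b c : ℝ}

lemma two_rpow_shift (p : ℝ) : (2:ℝ)^(2-p) = 4 * 2^(-p) := by
  rw [show (2:ℝ)-p = 2 + (-p) by ring, rpow_add two_pos]
  norm_num

lemma two_rpow_shift1 (p : ℝ) : (2:ℝ)^(2-p) = 2 * 2^(1-p) := by
  rw [show (2:ℝ)-p = 1 + (1-p) by ring, rpow_add two_pos, rpow_one]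

section
set_option maxHeartbeats 1000000
variable {p κ a b c : ℝ}

lemma quadV_low (hp2 : 2 ≤ p) (hκ : 0 ≤ κ) (hb : 0 ≤ b) (hab : b ≤ a)
    (hc : |c| ≤ a*b) :
    2^(-p) * ((κ+a+b)^(p-2) * (a^2+b^2-2*c))
      ≤ ((κ+a)^((p-2)/2))^2*a^2 + ((κ+b)^((p-2)/2))^2*b^2
        - 2*((κ+a)^((p-2)/2)*(κ+b)^((p-2)/2))*c := by
  have hq : (0:ℝ) ≤ (p-2)/2 := by linarith
  have ha : 0 ≤ a := le_trans hb hab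
  have hsl := scalar_low hq hκ hb hab
  have hhalf := fact_half hp2 hκ hb hab
  rw [two_rpow_shift] at hhalf
  have hgsq : ((κ+a)^((p-2)/2))^2 = (κ+a)^(p-2) := fact_gsq hp2 (by linarith)
  set ga := (κ+a)^((p-2)/2) with hgadef
  set gb := (κ+b)^((p-2)/2) with hgbdef
  set M := (κ+a+b)^(p-2) with hMdef
  have hga : 0 ≤ ga := rpow_nonneg (by linarith) _
  have hgb : 0 ≤ gb := rpow_nonneg (by linarith) _
  have hM : 0 ≤ M := rpow_nonneg (by linarith) _
  have hP : (0:ℝ) < 2^(-p) := rpow_pos_of_pos two_pos _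
  have h3 : 4*2^(-p)*M*(a-b)^2 ≤ ga^2*(a-b)^2 := by
    rw [hgsq]; linarith [mul_le_mul_of_nonneg_right hhalf (sq_nonneg (a-b))]
  -- endpoint c = ab
  have e0 : 0 ≤ ga*(a-b) := mul_nonneg hga (by linarith)
  have e1 : (ga*(a-b))^2 ≤ (ga*a - gb*b)^2 := pow_le_pow_left₀ e0 hsl 2
  have hDp : 0 ≤ (ga*a-gb*b)^2 - 2^(-p)*(M*(a-b)^2) := by
    nlinarith [mul_nonneg (mul_nonneg hP.le hM) (sq_nonneg (a-b)), e1, h3]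
  -- endpoint c = -ab
  have hDm : 0 ≤ (ga*a+gb*b)^2 - 2^(-p)*(M*(a+b)^2) := by
    have h3' : 4*2^(-p)*M*a^2 ≤ ga^2*a^2 := by
      rw [hgsq]; linarith [mul_le_mul_of_nonneg_right hhalf (sq_nonneg a)]
    have h4 : (a+b)^2 ≤ 4*a^2 := by nlinarith
    have h5 : (ga*a)^2 ≤ (ga*a+gb*b)^2 := by
      nlinarith [mul_nonneg (mul_nonneg hga ha) (mul_nonneg hgb hb), sq_nonneg (gb*b)]
    have h6 := mul_le_mul_of_nonneg_left h4 (mul_nonneg hP.le hM)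
    nlinarith [h3', h5, h6]
  rcases eq_or_lt_of_le (mul_nonneg ha hb) with h0 | h0
  · have habs := abs_le.mp hc
    have hc0 : c = 0 := by linarith [habs.1, habs.2]
    have hint1 : 2^(-p)*(M*(a*b)) = 0 := by rw [← h0, mul_zero, mul_zero]
    have hint2 : ga*gb*(a*b) = 0 := by rw [← h0, mul_zero]
    rw [hc0]
    linarith [hDp, hint1, hint2]
  · have habs := abs_le.mp hc
    have iden : 2*(a*b) * ((ga^2*a^2 + gb^2*b^2 - 2*(ga*gb)*c) - 2^(-p)*(M*(a^2+b^2-2*c)))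
        = (a*b + c) * ((ga*a-gb*b)^2 - 2^(-p)*(M*(a-b)^2))
          + (a*b - c) * ((ga*a+gb*b)^2 - 2^(-p)*(M*(a+b)^2)) := by ring
    have key : 0 ≤ 2*(a*b) * ((ga^2*a^2 + gb^2*b^2 - 2*(ga*gb)*c)
        - 2^(-p)*(M*(a^2+b^2-2*c))) := by
      rw [iden]
      exact add_nonneg (mul_nonneg (by linarith) hDp) (mul_nonneg (by linarith) hDm)
    have := (mul_nonneg_iff_of_pos_left (by linarith : (0:ℝ) < 2*(a*b))).mp key
    linarith

lemma quadV_up (hp2 : 2 ≤ p) (hκ : 0 ≤ κ) (hb : 0 ≤ b) (hab : b ≤ a)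
    (hc : |c| ≤ a*b) :
    ((κ+a)^((p-2)/2))^2*a^2 + ((κ+b)^((p-2)/2))^2*b^2
        - 2*((κ+a)^((p-2)/2)*(κ+b)^((p-2)/2))*c
      ≤ (max ((p-2)/2) 1 + 1)^2 * ((κ+a+b)^(p-2) * (a^2+b^2-2*c)) := by
  have hq : (0:ℝ) ≤ (p-2)/2 := by linarith
  have ha : 0 ≤ a := le_trans hb hab
  have hK1 : (1:ℝ) ≤ max ((p-2)/2) 1 + 1 := by
    have := le_max_right ((p-2)/2) 1; linarith
  have hsl := scalar_low hq hκ hb hab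
  have hsu := scalar_up hq hκ hb hab
  have hgsq : ((κ+a)^((p-2)/2))^2 = (κ+a)^(p-2) := fact_gsq hp2 (by linarith)
  have hfaM : (κ+a)^(p-2) ≤ (κ+a+b)^(p-2) :=
    rpow_le_rpow (by linarith) (by linarith) (by linarith)
  have hgagb := fact_gagb hp2 hκ hb hab
  set K := max ((p-2)/2) 1 + 1 with hKdef
  set ga := (κ+a)^((p-2)/2) with hgadef
  set gb := (κ+b)^((p-2)/2) with hgbdef
  set M := (κ+a+b)^(p-2) with hMdef
  have hga : 0 ≤ ga := rpow_nonneg (by linarith) _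
  have hgb : 0 ≤ gb := rpow_nonneg (by linarith) _
  have hM : 0 ≤ M := rpow_nonneg (by linarith) _
  have hK2 : (1:ℝ) ≤ K^2 := by nlinarith
  -- endpoint c = ab
  have e0 : 0 ≤ ga*a - gb*b := le_trans (mul_nonneg hga (by linarith)) hsl
  have e1 : (ga*a - gb*b)^2 ≤ (K*(ga*(a-b)))^2 := pow_le_pow_left₀ e0 hsu 2
  have hUp : (ga*a-gb*b)^2 ≤ K^2*(M*(a-b)^2) := by
    have h3 : ga^2*(a-b)^2 ≤ M*(a-b)^2 := by
      rw [hgsq]; exact mul_le_mul_of_nonneg_right hfaM (sq_nonneg _)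
    nlinarith [mul_le_mul_of_nonneg_left h3 (sq_nonneg K), e1]
  -- slope
  have habs := abs_le.mp hc
  have hslope : 0 ≤ (a*b - c) * (K^2*M - ga*gb) := by
    apply mul_nonneg (by linarith)
    have hMK : M ≤ K^2*M := le_mul_of_one_le_left hM hK2
    linarith [hgagb]
  linarith [hUp, hslope]

lemma quadS_low (hp2 : 2 ≤ p) (hκ : 0 ≤ κ) (hb : 0 ≤ b) (hab : b ≤ a)
    (hc : |c| ≤ a*b) :
    2^(1-p) * ((κ+a+b)^(p-2) * (a^2+b^2-2*c))
      ≤ (κ+a)^(p-2)*a^2 + (κ+b)^(p-2)*b^2 - ((κ+a)^(p-2) + (κ+b)^(p-2))*c := by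
  have hr : (0:ℝ) ≤ p-2 := by linarith
  have ha : 0 ≤ a := le_trans hb hab
  have hsl := scalar_low hr hκ hb hab
  have hhalf := fact_half hp2 hκ hb hab
  rw [two_rpow_shift1] at hhalf
  set fa := (κ+a)^(p-2) with hfadef
  set fb := (κ+b)^(p-2) with hfbdef
  set M := (κ+a+b)^(p-2) with hMdef
  have hfa : 0 ≤ fa := rpow_nonneg (by linarith) _
  have hfb : 0 ≤ fb := rpow_nonneg (by linarith) _
  have hM : 0 ≤ M := rpow_nonneg (by linarith) _
  have hP : (0:ℝ) < 2^(1-p) := rpow_pos_of_pos two_pos _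
  have hE : 2^(1-p)*(M*(a-b)^2) ≤ fa*a^2+fb*b^2-(fa+fb)*(a*b) := by
    have h1 : fa*(a-b)*(a-b) ≤ (fa*a - fb*b)*(a-b) :=
      mul_le_mul_of_nonneg_right hsl (by linarith)
    have h2 : 2*2^(1-p)*M*(a-b)^2 ≤ fa*(a-b)^2 := by
      linarith [mul_le_mul_of_nonneg_right hhalf (sq_nonneg (a-b))]
    nlinarith [h1, h2, mul_nonneg (mul_nonneg hP.le hM) (sq_nonneg (a-b))]
  have habs := abs_le.mp hc
  have hslope : 0 ≤ (a*b - c) * ((fa + fb) - 2*2^(1-p)*M) := by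
    apply mul_nonneg (by linarith)
    linarith [hhalf, hfb]
  nlinarith [hE, hslope]

end


section
variable {n : ℕ} (A B : Matrix (Fin n) (Fin n) ℝ)

lemma fnorm_nonneg : 0 ≤ fnorm A := Real.sqrt_nonneg _

lemma fnorm_sq : fnorm A ^ 2 = ∑ i, ∑ j, (A i j) ^ 2 :=
  Real.sq_sqrt (by positivity)

lemma fnorm_smul_sub_sq (s t : ℝ) :
    fnorm (s • A - t • B) ^ 2
      = s^2 * fnorm A ^ 2 + t^2 * fnorm B ^ 2 - 2*(s*t) * fdot A B := by
  rw [fnorm_sq, fnorm_sq, fnorm_sq]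
  simp only [fdot, Matrix.sub_apply, Matrix.smul_apply, smul_eq_mul, Finset.mul_sum]
  rw [← Finset.sum_add_distrib, ← Finset.sum_sub_distrib]
  refine Finset.sum_congr rfl fun i _ => ?_
  rw [← Finset.sum_add_distrib, ← Finset.sum_sub_distrib]
  exact Finset.sum_congr rfl fun j _ => by ring

lemma fdot_smul_sub (s t : ℝ) :
    fdot (s • A - t • B) (A - B)
      = s * fnorm A ^ 2 + t * fnorm B ^ 2 - (s+t) * fdot A B := by
  rw [fnorm_sq, fnorm_sq]
  simp only [fdot, Matrix.sub_apply, Matrix.smul_apply, smul_eq_mul, Finset.mul_sum]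
  rw [← Finset.sum_add_distrib, ← Finset.sum_sub_distrib]
  refine Finset.sum_congr rfl fun i _ => ?_
  rw [← Finset.sum_add_distrib, ← Finset.sum_sub_distrib]
  exact Finset.sum_congr rfl fun j _ => by ring

lemma fnorm_sub_sq :
    fnorm (A - B) ^ 2 = fnorm A ^ 2 + fnorm B ^ 2 - 2 * fdot A B := by
  have h := fnorm_smul_sub_sq A B 1 1
  simpa using h

lemma fdot_abs_le : |fdot A B| ≤ fnorm A * fnorm B := by
  have h : (∑ x : Fin n × Fin n, A x.1 x.2 * B x.1 x.2)^2
      ≤ (∑ x : Fin n × Fin n, (A x.1 x.2)^2) * (∑ x : Fin n × Fin n, (B x.1 x.2)^2) :=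
    Finset.sum_mul_sq_le_sq_mul_sq _ _ _
  rw [Fintype.sum_prod_type, Fintype.sum_prod_type, Fintype.sum_prod_type] at h
  have h2 : (fdot A B)^2 ≤ (fnorm A * fnorm B)^2 := by
    rw [mul_pow, fnorm_sq, fnorm_sq]; exact h
  have hnn : 0 ≤ fnorm A * fnorm B := mul_nonneg (fnorm_nonneg A) (fnorm_nonneg B)
  calc |fdot A B| = Real.sqrt ((fdot A B)^2) := (Real.sqrt_sq_eq_abs _).symm
    _ ≤ Real.sqrt ((fnorm A * fnorm B)^2) := Real.sqrt_le_sqrt h2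
    _ = fnorm A * fnorm B := Real.sqrt_sq hnn

lemma fnorm_sub_comm : fnorm (A - B) = fnorm (B - A) := by
  simp only [fnorm, Matrix.sub_apply]
  congr 1
  refine Finset.sum_congr rfl fun i _ => Finset.sum_congr rfl fun j _ => by ring

lemma fnorm_sub_le : fnorm (A - B) ≤ fnorm A + fnorm B := by
  have habs := abs_le.mp (fdot_abs_le A B)
  have h : fnorm (A - B)^2 ≤ (fnorm A + fnorm B)^2 := by
    rw [fnorm_sub_sq]; nlinarith [habs.1]
  have hnn : 0 ≤ fnorm A + fnorm B := add_nonneg (fnorm_nonneg A) (fnorm_nonneg B)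
  calc fnorm (A-B) = Real.sqrt (fnorm (A-B)^2) :=
        (Real.sqrt_sq (fnorm_nonneg _)).symm
    _ ≤ Real.sqrt ((fnorm A + fnorm B)^2) := Real.sqrt_le_sqrt h
    _ = fnorm A + fnorm B := Real.sqrt_sq hnn

end


section
set_option maxHeartbeats 1000000

lemma main_aux {n : ℕ} (p κ : ℝ) (hp : 1 < p) (hp2 : 2 ≤ p) (hκ : 0 ≤ κ)
    (A B : Matrix (Fin n) (Fin n) ℝ) (hBA : fnorm B ≤ fnorm A) :
    fnorm (A-B)^p ≤ 2^p * fnorm (Vmap p κ A - Vmap p κ B)^2 ∧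
    fnorm (Vmap p κ A - Vmap p κ B)^2
      ≤ ((max ((p-2)/2) 1 + 1)^2 * 2^p)^(p/(p-1))
          * fnorm (Smap p κ A - Smap p κ B)^(p/(p-1)) := by
  have hp0 : (0:ℝ) < p := by linarith
  set a := fnorm A with hadef
  set b := fnorm B with hbdef
  set c := fdot A B with hcdef
  have ha : 0 ≤ a := fnorm_nonneg A
  have hb : 0 ≤ b := fnorm_nonneg B
  have hc : |c| ≤ a*b := fdot_abs_le A B
  set δ := fnorm (A - B) with hδdef
  have hδ : 0 ≤ δ := fnorm_nonneg _
  have hδ2 : δ^2 = a^2 + b^2 - 2*c := by rw [hδdef, fnorm_sub_sq]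
  set W2 := fnorm (Vmap p κ A - Vmap p κ B)^2 with hW2def
  have hW2nn : 0 ≤ W2 := sq_nonneg _
  have hW2 : W2 = ((κ+a)^((p-2)/2))^2*a^2 + ((κ+b)^((p-2)/2))^2*b^2
      - 2*((κ+a)^((p-2)/2)*(κ+b)^((p-2)/2))*c := by
    rw [hW2def]
    show fnorm (((κ + fnorm A) ^ ((p - 2) / 2)) • A
        - ((κ + fnorm B) ^ ((p - 2) / 2)) • B) ^2 = _
    rw [fnorm_smul_sub_sq]
  set σ := fnorm (Smap p κ A - Smap p κ B) with hσdef
  have hσ : 0 ≤ σ := fnorm_nonneg _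
  have hSdot : fdot (Smap p κ A - Smap p κ B) (A - B)
      = (κ+a)^(p-2)*a^2 + (κ+b)^(p-2)*b^2 - ((κ+a)^(p-2) + (κ+b)^(p-2))*c := by
    show fdot (((κ + fnorm A) ^ (p - 2)) • A - ((κ + fnorm B) ^ (p - 2)) • B) (A - B) = _
    rw [fdot_smul_sub]
  have h2pos : (0:ℝ) < 2^p := Real.rpow_pos_of_pos two_pos p
  -- first inequality
  have q1 : 2^(-p) * ((κ+a+b)^(p-2) * δ^2) ≤ W2 := by
    rw [hδ2, hW2]; exact quadV_low hp2 hκ hb hBA hc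
  have hMδlow : δ ≤ κ + a + b := le_trans (fnorm_sub_le A B) (by linarith)
  have first : δ^p ≤ 2^p * W2 := by
    rcases eq_or_lt_of_le hδ with h0 | h0
    · rw [← h0, Real.zero_rpow (ne_of_gt hp0)]
      positivity
    · have hMδ : δ^(p-2) ≤ (κ+a+b)^(p-2) :=
        Real.rpow_le_rpow hδ hMδlow (by linarith)
      have hsplit : δ^p = δ^(p-2) * δ^2 := by
        rw [← Real.rpow_natCast δ 2, ← Real.rpow_add h0]
        norm_num
      have h2p1 : (2:ℝ)^p * 2^(-p) = 1 := by
        rw [← Real.rpow_add two_pos]; simp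
      have hq1' := mul_le_mul_of_nonneg_left q1 h2pos.le
      have heq : (2:ℝ)^p * (2^(-p) * ((κ+a+b)^(p-2) * δ^2))
          = (κ+a+b)^(p-2) * δ^2 := by
        rw [← mul_assoc, h2p1, one_mul]
      rw [heq] at hq1'
      have := mul_le_mul_of_nonneg_right hMδ (sq_nonneg δ)
      calc δ^p = δ^(p-2) * δ^2 := hsplit
        _ ≤ (κ+a+b)^(p-2) * δ^2 := this
        _ ≤ 2^p * W2 := hq1'
    -- second inequality
  refine ⟨first, ?_⟩
  set K := max ((p-2)/2) 1 + 1 with hKdef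
  have hK1 : (1:ℝ) ≤ K := by
    have := le_max_right ((p-2)/2) 1; rw [hKdef]; linarith
  have hL : (0:ℝ) < K^2 * 2^p := by positivity
  have q2 : W2 ≤ K^2 * ((κ+a+b)^(p-2) * δ^2) := by
    rw [hδ2, hW2]; exact quadV_up hp2 hκ hb hBA hc
  have q3 : 2^(1-p) * ((κ+a+b)^(p-2) * δ^2) ≤ fdot (Smap p κ A - Smap p κ B) (A - B) := by
    rw [hδ2, hSdot]; exact quadS_low hp2 hκ hb hBA hc
  have hCS : fdot (Smap p κ A - Smap p κ B) (A - B) ≤ σ * δ :=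
    le_trans (le_abs_self _) (fdot_abs_le _ _)
  -- M δ² ≤ 2^(p-1) σ δ
  have h2p2 : (2:ℝ)^(p-1) * 2^(1-p) = 1 := by
    rw [← Real.rpow_add two_pos]; norm_num
  have h2p1pos : (0:ℝ) < 2^(p-1) := Real.rpow_pos_of_pos two_pos _
  have hMd : (κ+a+b)^(p-2) * δ^2 ≤ 2^(p-1) * (σ * δ) := by
    have h := mul_le_mul_of_nonneg_left (le_trans q3 hCS) h2p1pos.le
    calc (κ+a+b)^(p-2) * δ^2
        = 2^(p-1) * (2^(1-p) * ((κ+a+b)^(p-2) * δ^2)) := by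
          rw [← mul_assoc, h2p2, one_mul]
      _ ≤ 2^(p-1) * (σ * δ) := h
  -- δ ≤ 2 * W2^(1/p)
  have hδW : δ ≤ 2 * W2^(1/p) := by
    have h1 : (δ^p)^(1/p) ≤ (2^p * W2)^(1/p) :=
      Real.rpow_le_rpow (Real.rpow_nonneg hδ p) first (by positivity)
    have h2 : (δ^p)^(1/p) = δ := by
      rw [← Real.rpow_mul hδ, mul_one_div, div_self (ne_of_gt hp0), Real.rpow_one]
    have h3 : ((2:ℝ)^p * W2)^(1/p) = 2 * W2^(1/p) := by
      rw [Real.mul_rpow h2pos.le hW2nn, ← Real.rpow_mul (by norm_num : (0:ℝ) ≤ 2),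
        mul_one_div, div_self (ne_of_gt hp0), Real.rpow_one]
    rw [h2, h3] at h1; exact h1
  -- W2 ≤ K^2 2^p σ W2^(1/p)
  have hW2le : W2 ≤ (K^2 * 2^p) * σ * W2^(1/p) := by
    have h4 : W2 ≤ K^2 * (2^(p-1) * (σ * δ)) := by
      calc W2 ≤ K^2 * ((κ+a+b)^(p-2) * δ^2) := q2
        _ ≤ K^2 * (2^(p-1) * (σ * δ)) :=
            mul_le_mul_of_nonneg_left hMd (by positivity)
    have h5 : σ * δ ≤ σ * (2 * W2^(1/p)) := mul_le_mul_of_nonneg_left hδW hσ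
    have h6 : K^2 * (2^(p-1) * (σ * δ)) ≤ K^2 * (2^(p-1) * (σ * (2 * W2^(1/p)))) := by
      apply mul_le_mul_of_nonneg_left _ (by positivity)
      exact mul_le_mul_of_nonneg_left h5 h2p1pos.le
    have h7 : K^2 * (2^(p-1) * (σ * (2 * W2^(1/p)))) = (K^2 * (2^(p-1)*2)) * σ * W2^(1/p) := by
      ring
    have h8 : (2:ℝ)^(p-1) * 2 = 2^p := by
      nth_rewrite 2 [show (2:ℝ) = 2^(1:ℝ) by rw [Real.rpow_one]]
      rw [← Real.rpow_add two_pos]; norm_num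
    rw [h7, h8] at h6
    exact le_trans h4 h6
  rcases eq_or_lt_of_le hW2nn with hW0 | hW0
  · rw [← hW0]
    exact mul_nonneg (Real.rpow_nonneg hL.le _) (Real.rpow_nonneg hσ _)
  · set L := K^2 * 2^p with hLdef
    have hW2p : 0 < W2^(1/p) := Real.rpow_pos_of_pos hW0 _
    have hcancel : W2^(1-1/p) ≤ L * σ := by
      have hsplit : W2^(1-1/p) * W2^(1/p) = W2 := by
        rw [← Real.rpow_add hW0]; norm_num
      have : W2^(1-1/p) * W2^(1/p) ≤ (L * σ) * W2^(1/p) := by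
        rw [hsplit]; linarith [hW2le]
      exact le_of_mul_le_mul_right this hW2p
    have hfin := Real.rpow_le_rpow (Real.rpow_nonneg hW2nn _) hcancel
      (by apply div_nonneg <;> linarith : (0:ℝ) ≤ p/(p-1))
    have hexp : (1-1/p) * (p/(p-1)) = 1 := by
      have hp1 : p - 1 ≠ 0 := by linarith
      have hpne : p ≠ 0 := ne_of_gt hp0
      field_simp
    have hl : (W2^(1-1/p))^(p/(p-1)) = W2 := by
      rw [← Real.rpow_mul hW2nn, hexp, Real.rpow_one]
    have hr : (L * σ)^(p/(p-1)) = L^(p/(p-1)) * σ^(p/(p-1)) :=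
      Real.mul_rpow hL.le hσ
    rw [hl, hr] at hfin
    exact hfin

end


/-- For `p ≥ 2` there exist constants `C₁, C₂ > 0`, depending only on `p` and `n`, such that
for every `κ ≥ 0` and all matrices `A, B`:
`|A − B|^p ≤ C₁·|V(A) − V(B)|²` and `|V(A) − V(B)|² ≤ C₂·|S(A) − S(B)|^{p'}`
where `p' = p/(p-1)`. -/
theorem tensor_relation_p_ge_two (n : ℕ) (hn : 1 ≤ n) (p : ℝ) (hp : 1 < p) (hp2 : 2 ≤ p) :
    ∃ C₁ C₂ : ℝ, 0 < C₁ ∧ 0 < C₂ ∧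
      ∀ κ : ℝ, 0 ≤ κ → ∀ A B : Matrix (Fin n) (Fin n) ℝ,
        fnorm (A - B) ^ p ≤ C₁ * fnorm (Vmap p κ A - Vmap p κ B) ^ 2
          ∧ fnorm (Vmap p κ A - Vmap p κ B) ^ 2
            ≤ C₂ * fnorm (Smap p κ A - Smap p κ B) ^ (p / (p - 1)) := by
  have hKpos : (0:ℝ) < max ((p-2)/2) 1 + 1 := by
    have := le_max_right ((p-2)/2) 1; linarith
  refine ⟨2^p, ((max ((p-2)/2) 1 + 1)^2 * 2^p)^(p/(p-1)), Real.rpow_pos_of_pos two_pos p,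
    Real.rpow_pos_of_pos (mul_pos (pow_pos hKpos 2) (Real.rpow_pos_of_pos two_pos p)) _,
    fun κ hκ A B => ?_⟩
  rcases le_total (fnorm B) (fnorm A) with h | h
  · exact main_aux p κ hp hp2 hκ A B h
  · have h' := main_aux p κ hp hp2 hκ B A h
    rw [fnorm_sub_comm A B, fnorm_sub_comm (Vmap p κ A) (Vmap p κ B),
      fnorm_sub_comm (Smap p κ A) (Smap p κ B)]
    exact h'
end
end

section
/- Assume 1 < p ≤ 2. There exist constants C₁, C₂ > 0, depending only on p and n, such that for every κ ≥ 0 and all matrices A, B ∈ ℝ^{n×n} it holds that |S(A) − S(B)|^{p'} ≤ C₁·|V(A) − V(B)|² and |V(A) − V(B)|² ≤ C₂·|A − B|^p. -/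
open scoped BigOperators

/-! Flattening matrices, `S` and `V` become the radial maps `R_s u = (κ + ‖u‖)^s u` of a Euclidean
space for `s = p - 2` and `s = (p - 2)/2`. If `‖v‖ ≤ ‖u‖`, `N = κ + ‖u‖` and `-1 ≤ s ≤ 0`, then
`(1 + s) N^s ‖u - v‖ ≤ ‖R_s u - R_s v‖ ≤ 2 N^s ‖u - v‖`: the upper bound is the triangle inequality
plus monotonicity of `t ↦ (κ + t)^s t`, the lower one splits `‖R_s u - R_s v‖²` into a radial part
`(N^s ‖u‖ - (κ + ‖v‖)^s ‖v‖)²` and a nonnegative angular part. Hence `|S(A) - S(B)|^{p'}` and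
`|V(A) - V(B)|²` are both comparable to `N^{p-2} |A - B|²`, and `|A - B| ≤ 2N` converts the
surplus powers of `|A - B|` into powers of `N`. -/

open Real

/-- With `r = (a - b)/(κ + b)`, so that `κ + a = (κ + b)(1 + r)`, this is Bernoulli's inequality
`(1 + r)^(-s) ≤ 1 - s r`. -/
lemma one_add_mul_rpow_mul_sub_le {κ s a b : ℝ} (hκ : 0 ≤ κ) (hs1 : -1 ≤ s) (hs0 : s ≤ 0)
    (hb : 0 ≤ b) (hba : b ≤ a) :
    (1 + s) * (κ + a) ^ s * (a - b) ≤ (κ + a) ^ s * a - (κ + b) ^ s * b := by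
  have hα : 0 ≤ (κ + a) ^ s := rpow_nonneg (by linarith) s
  rcases hb.eq_or_lt with rfl | hb
  · nlinarith [mul_nonneg hα (by linarith : (0:ℝ) ≤ a)]
  have hkb : 0 < κ + b := by linarith
  set r := (a - b) / (κ + b)
  have hr : 0 ≤ r := div_nonneg (by linarith) hkb.le
  have hka : κ + a = (κ + b) * (1 + r) := by
    linear_combination -(mul_div_cancel₀ (a - b) hkb.ne' : (κ + b) * r = a - b)
  have hβ : (κ + b) ^ s = (κ + a) ^ s * (1 + r) ^ (-s) := by
    rw [hka, mul_rpow hkb.le (by linarith), mul_assoc, ← rpow_add (by linarith),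
      add_neg_cancel, rpow_zero, mul_one]
  have hbern : (1 + r) ^ (-s) ≤ 1 + -s * r :=
    rpow_one_add_le_one_add_mul_self (by linarith) (by linarith) (by linarith)
  have hrb : r * b ≤ a - b := by
    rw [div_mul_eq_mul_div, div_le_iff₀ hkb]
    nlinarith
  have hβb : (1 + r) ^ (-s) * b ≤ b + -s * (a - b) := by
    nlinarith [mul_le_mul_of_nonneg_right hbern hb.le,
      mul_le_mul_of_nonneg_left hrb (neg_nonneg.2 hs0)]
  rw [hβ, mul_assoc]
  nlinarith [mul_le_mul_of_nonneg_left hβb hα]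

lemma rpow_add_mul_le_rpow_add_mul {κ s a b : ℝ} (hκ : 0 ≤ κ) (hs0 : s ≤ 0) (hba : b ≤ a)
    (hb : 0 ≤ b) : (κ + a) ^ s * b ≤ (κ + b) ^ s * b := by
  rcases hb.eq_or_lt with rfl | hb
  · simp
  exact mul_le_mul_of_nonneg_right
    (rpow_le_rpow_of_nonpos (by linarith) (by linarith) hs0) hb.le

lemma rpow_le_rpow_sub_mul_rpow {c d q r : ℝ} (hd : 0 < d) (hdc : d ≤ c) (hqr : q ≤ r) :
    d ^ r ≤ c ^ (r - q) * d ^ q :=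
  calc d ^ r = d ^ (r - q) * d ^ q := by rw [← rpow_add hd, sub_add_cancel]
    _ ≤ c ^ (r - q) * d ^ q := by gcongr

lemma rpow_mul_sq_le {p N d : ℝ} (hp2 : p ≤ 2) (hd : 0 ≤ d) (hdN : d ≤ 2 * N) :
    N ^ (p - 2) * d ^ 2 ≤ 2 ^ (2 - p) * d ^ p := by
  rcases hd.eq_or_lt with rfl | hd
  · rw [zero_pow two_ne_zero, mul_zero]
    exact mul_nonneg (by positivity) (rpow_nonneg le_rfl p)
  have hN : 0 < N := by linarith
  calc N ^ (p - 2) * d ^ 2 ≤ N ^ (p - 2) * ((2 * N) ^ (2 - p) * d ^ p) := by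
        gcongr
        exact_mod_cast rpow_le_rpow_sub_mul_rpow hd hdN hp2
    _ = 2 ^ (2 - p) * (N ^ (p - 2) * N ^ (2 - p)) * d ^ p := by
        rw [mul_rpow zero_le_two hN.le]; ring
    _ = 2 ^ (2 - p) * d ^ p := by rw [← rpow_add hN]; norm_num

lemma rpow_mul_rpow_conj_le {p N d : ℝ} (hp : 1 < p) (hp2 : p ≤ 2) (hd : 0 ≤ d) (hdN : d ≤ 2 * N) :
    (N ^ (p - 2) * d) ^ (p / (p - 1)) ≤ 2 ^ (p / (p - 1) - 2) * (N ^ (p - 2) * d ^ 2) := by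
  have hp1 : 0 < p - 1 := by linarith
  have hp' : 2 ≤ p / (p - 1) := by rw [le_div_iff₀ hp1]; linarith
  rcases hd.eq_or_lt with rfl | hd
  · rw [mul_zero, zero_rpow (by positivity)]
    simp
  have hN : 0 < N := by linarith
  calc (N ^ (p - 2) * d) ^ (p / (p - 1))
      = N ^ ((p - 2) * (p / (p - 1))) * d ^ (p / (p - 1)) := by
        rw [mul_rpow (by positivity) hd.le, rpow_mul hN.le]
    _ ≤ N ^ ((p - 2) * (p / (p - 1))) * ((2 * N) ^ (p / (p - 1) - 2) * d ^ (2 : ℝ)) := by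
        gcongr
        exact rpow_le_rpow_sub_mul_rpow hd hdN hp'
    _ = 2 ^ (p / (p - 1) - 2) * (N ^ ((p - 2) * (p / (p - 1))) * N ^ (p / (p - 1) - 2))
          * d ^ 2 := by
        rw [mul_rpow zero_le_two hN.le, rpow_two]; ring
    _ = 2 ^ (p / (p - 1) - 2) * (N ^ (p - 2) * d ^ 2) := by
        rw [← rpow_add hN,
          show (p - 2) * (p / (p - 1)) + (p / (p - 1) - 2) = p - 2 by field_simp; ring, mul_assoc]

lemma rpow_div_two_sq {N : ℝ} (hN : 0 ≤ N) (t : ℝ) : (N ^ (t / 2)) ^ 2 = N ^ t := by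
  rw [← rpow_mul_natCast hN]; norm_num

lemma norm_sub_le_two_mul_add_norm {E : Type*} [SeminormedAddCommGroup E] {κ : ℝ} {u v : E}
    (hκ : 0 ≤ κ) (hvu : ‖v‖ ≤ ‖u‖) : ‖u - v‖ ≤ 2 * (κ + ‖u‖) := by
  linarith [norm_sub_le u v]

section RadialPower

variable {E : Type*} [NormedAddCommGroup E] [InnerProductSpace ℝ E]

noncomputable def radialPow (κ s : ℝ) (u : E) : E := (κ + ‖u‖) ^ s • u

variable {κ s : ℝ} {u v : E}

lemma norm_radialPow_sub_le (hκ : 0 ≤ κ) (hs1 : -1 ≤ s) (hs0 : s ≤ 0) (hvu : ‖v‖ ≤ ‖u‖) :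
    ‖radialPow κ s u - radialPow κ s v‖ ≤ 2 * ((κ + ‖u‖) ^ s * ‖u - v‖) := by
  set α := (κ + ‖u‖) ^ s
  set β := (κ + ‖v‖) ^ s
  have hα : 0 ≤ α := rpow_nonneg (by positivity) s
  have hαβ : α * ‖v‖ ≤ β * ‖v‖ := rpow_add_mul_le_rpow_add_mul hκ hs0 hvu (norm_nonneg v)
  have hmono := one_add_mul_rpow_mul_sub_le hκ hs1 hs0 (norm_nonneg v) hvu
  have hsplit : radialPow κ s u - radialPow κ s v = α • (u - v) - (β - α) • v := by
    simp only [radialPow, smul_sub, sub_smul]; abel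
  have hcross : ‖(β - α) • v‖ = β * ‖v‖ - α * ‖v‖ :=
    calc ‖(β - α) • v‖ = |(β - α) * ‖v‖| := by rw [norm_smul, norm_eq_abs, abs_mul, abs_norm]
      _ = β * ‖v‖ - α * ‖v‖ := by rw [abs_of_nonneg (by linarith [sub_mul β α ‖v‖]), sub_mul]
  calc ‖radialPow κ s u - radialPow κ s v‖ ≤ ‖α • (u - v)‖ + ‖(β - α) • v‖ := by
        rw [hsplit]; exact norm_sub_le _ _
    _ ≤ 2 * (α * ‖u - v‖) := by
        rw [norm_smul, norm_eq_abs, abs_of_nonneg hα, hcross]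
        nlinarith [mul_le_mul_of_nonneg_left (norm_sub_norm_le u v) hα,
          mul_nonneg (by linarith : 0 ≤ 1 + s) (mul_nonneg hα (sub_nonneg.2 hvu))]

lemma sq_mul_norm_sub_sq_le_norm_radialPow_sub_sq (hκ : 0 ≤ κ) (hs1 : -1 ≤ s) (hs0 : s ≤ 0)
    (hvu : ‖v‖ ≤ ‖u‖) :
    (1 + s) ^ 2 * ((κ + ‖u‖) ^ s) ^ 2 * ‖u - v‖ ^ 2 ≤ ‖radialPow κ s u - radialPow κ s v‖ ^ 2 := by
  set α := (κ + ‖u‖) ^ s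
  set β := (κ + ‖v‖) ^ s
  set X := ‖u‖ * ‖v‖ - inner ℝ u v
  have hα : 0 ≤ α := rpow_nonneg (by positivity) s
  have hβ : 0 ≤ β := rpow_nonneg (by positivity) s
  have hX : 0 ≤ X := sub_nonneg.2 (real_inner_le_norm u v)
  have hexp : ‖radialPow κ s u - radialPow κ s v‖ ^ 2
      = (α * ‖u‖ - β * ‖v‖) ^ 2 + 2 * (α * β) * X := by
    rw [radialPow, radialPow, norm_sub_sq_real, norm_smul, norm_smul, real_inner_smul_left,
      real_inner_smul_right, norm_eq_abs, norm_eq_abs, abs_of_nonneg hα, abs_of_nonneg hβ]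
    ring
  have hdist : ‖u - v‖ ^ 2 = (‖u‖ - ‖v‖) ^ 2 + 2 * X := by rw [norm_sub_sq_real]; ring
  have hradial : ((1 + s) * α * (‖u‖ - ‖v‖)) ^ 2 ≤ (α * ‖u‖ - β * ‖v‖) ^ 2 :=
    pow_le_pow_left₀ (mul_nonneg (mul_nonneg (by linarith) hα) (by linarith))
      (by linarith [one_add_mul_rpow_mul_sub_le hκ hs1 hs0 (norm_nonneg v) hvu]) 2
  have hangular : (1 + s) ^ 2 * α ^ 2 * X ≤ α * β * X := by
    rcases (norm_nonneg v).eq_or_lt with hv | hv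
    · simp [X, norm_eq_zero.1 hv.symm]
    have hαβ : α ≤ β :=
      le_of_mul_le_mul_right (rpow_add_mul_le_rpow_add_mul hκ hs0 hvu hv.le) hv
    have hs : (1 + s) ^ 2 ≤ 1 := by nlinarith
    refine mul_le_mul_of_nonneg_right ?_ hX
    nlinarith [mul_le_mul_of_nonneg_left hαβ hα, mul_le_mul_of_nonneg_right hs (sq_nonneg α)]
  rw [hexp, hdist]
  nlinarith

variable {p : ℝ}

lemma norm_radialPow_sub_rpow_le (hp : 1 < p) (hp2 : p ≤ 2) (hκ : 0 ≤ κ) (u v : E) :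
    ‖radialPow κ (p - 2) u - radialPow κ (p - 2) v‖ ^ (p / (p - 1))
      ≤ 2 ^ (p / (p - 1)) * 2 ^ (p / (p - 1) - 2) * (2 / p) ^ 2
        * ‖radialPow κ ((p - 2) / 2) u - radialPow κ ((p - 2) / 2) v‖ ^ 2 := by
  wlog hvu : ‖v‖ ≤ ‖u‖ generalizing u v
  · simpa only [norm_sub_rev] using this v u (le_of_not_ge hvu)
  have hN : 0 ≤ κ + ‖u‖ := by positivity
  have hshifted : (κ + ‖u‖) ^ (p - 2) * ‖u - v‖ ^ 2
      ≤ (2 / p) ^ 2 * ‖radialPow κ ((p - 2) / 2) u - radialPow κ ((p - 2) / 2) v‖ ^ 2 := by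
    have h := sq_mul_norm_sub_sq_le_norm_radialPow_sub_sq hκ (s := (p - 2) / 2)
      (by linarith) (by linarith) hvu
    rw [rpow_div_two_sq hN, show 1 + (p - 2) / 2 = p / 2 by ring] at h
    calc (κ + ‖u‖) ^ (p - 2) * ‖u - v‖ ^ 2
        = (2 / p) ^ 2 * ((p / 2) ^ 2 * (κ + ‖u‖) ^ (p - 2) * ‖u - v‖ ^ 2) := by
          field_simp
      _ ≤ _ := by gcongr
  calc ‖radialPow κ (p - 2) u - radialPow κ (p - 2) v‖ ^ (p / (p - 1))
      ≤ (2 * ((κ + ‖u‖) ^ (p - 2) * ‖u - v‖)) ^ (p / (p - 1)) :=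
        rpow_le_rpow (norm_nonneg _)
          (norm_radialPow_sub_le hκ (by linarith) (by linarith) hvu) (by positivity)
    _ = 2 ^ (p / (p - 1)) * ((κ + ‖u‖) ^ (p - 2) * ‖u - v‖) ^ (p / (p - 1)) :=
        mul_rpow zero_le_two (by positivity)
    _ ≤ 2 ^ (p / (p - 1)) * (2 ^ (p / (p - 1) - 2) * ((κ + ‖u‖) ^ (p - 2) * ‖u - v‖ ^ 2)) := by
        gcongr
        exact rpow_mul_rpow_conj_le hp hp2 (norm_nonneg _) (norm_sub_le_two_mul_add_norm hκ hvu)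
    _ ≤ 2 ^ (p / (p - 1)) * (2 ^ (p / (p - 1) - 2) * ((2 / p) ^ 2
          * ‖radialPow κ ((p - 2) / 2) u - radialPow κ ((p - 2) / 2) v‖ ^ 2)) := by
        gcongr
    _ = _ := by ring

lemma norm_radialPow_half_sub_sq_le (hp : 0 ≤ p) (hp2 : p ≤ 2) (hκ : 0 ≤ κ) (u v : E) :
    ‖radialPow κ ((p - 2) / 2) u - radialPow κ ((p - 2) / 2) v‖ ^ 2
      ≤ 4 * 2 ^ (2 - p) * ‖u - v‖ ^ p := by
  wlog hvu : ‖v‖ ≤ ‖u‖ generalizing u v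
  · simpa only [norm_sub_rev] using this v u (le_of_not_ge hvu)
  calc ‖radialPow κ ((p - 2) / 2) u - radialPow κ ((p - 2) / 2) v‖ ^ 2
      ≤ (2 * ((κ + ‖u‖) ^ ((p - 2) / 2) * ‖u - v‖)) ^ 2 :=
        pow_le_pow_left₀ (norm_nonneg _)
          (norm_radialPow_sub_le hκ (by linarith) (by linarith) hvu) 2
    _ = 4 * ((κ + ‖u‖) ^ (p - 2) * ‖u - v‖ ^ 2) := by
        rw [mul_pow, mul_pow, rpow_div_two_sq (by positivity)]; ring
    _ ≤ 4 * (2 ^ (2 - p) * ‖u - v‖ ^ p) := by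
        gcongr 4 * ?_
        exact rpow_mul_sq_le hp2 (norm_nonneg _) (norm_sub_le_two_mul_add_norm hκ hvu)
    _ = _ := by ring

end RadialPower

noncomputable def flatEuclidean {n : ℕ} (A : Matrix (Fin n) (Fin n) ℝ) :
    EuclideanSpace ℝ (Fin n × Fin n) :=
  WithLp.toLp 2 fun ij => A ij.1 ij.2

lemma fnorm_eq_norm_flatEuclidean {n : ℕ} (A : Matrix (Fin n) (Fin n) ℝ) :
    fnorm A = ‖flatEuclidean A‖ := by
  rw [EuclideanSpace.norm_eq, fnorm, Fintype.sum_prod_type]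
  simp [flatEuclidean, sq_abs]

lemma fnorm_sub_eq_norm_sub_flatEuclidean {n : ℕ} (A B : Matrix (Fin n) (Fin n) ℝ) :
    fnorm (A - B) = ‖flatEuclidean A - flatEuclidean B‖ :=
  fnorm_eq_norm_flatEuclidean (A - B)

lemma flatEuclidean_Smap {n : ℕ} (p κ : ℝ) (A : Matrix (Fin n) (Fin n) ℝ) :
    flatEuclidean (Smap p κ A) = radialPow κ (p - 2) (flatEuclidean A) := by
  rw [Smap, radialPow, fnorm_eq_norm_flatEuclidean]; rfl

lemma flatEuclidean_Vmap {n : ℕ} (p κ : ℝ) (A : Matrix (Fin n) (Fin n) ℝ) :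
    flatEuclidean (Vmap p κ A) = radialPow κ ((p - 2) / 2) (flatEuclidean A) := by
  rw [Vmap, radialPow, fnorm_eq_norm_flatEuclidean]; rfl

theorem tensor_relation_p_le_two_general (n : ℕ) (p : ℝ) (hp : 1 < p) (hp2 : p ≤ 2) :
    ∃ C₁ C₂ : ℝ, 0 < C₁ ∧ 0 < C₂ ∧
      ∀ κ : ℝ, 0 ≤ κ → ∀ A B : Matrix (Fin n) (Fin n) ℝ,
        fnorm (Smap p κ A - Smap p κ B) ^ (p / (p - 1))
            ≤ C₁ * fnorm (Vmap p κ A - Vmap p κ B) ^ 2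
          ∧ fnorm (Vmap p κ A - Vmap p κ B) ^ 2 ≤ C₂ * fnorm (A - B) ^ p := by
  have hp0 : 0 < p := by linarith
  refine ⟨2 ^ (p / (p - 1)) * 2 ^ (p / (p - 1) - 2) * (2 / p) ^ 2, 4 * 2 ^ (2 - p),
    by positivity, by positivity, fun κ hκ A B => ?_⟩
  simp only [fnorm_sub_eq_norm_sub_flatEuclidean, flatEuclidean_Smap, flatEuclidean_Vmap]
  exact ⟨norm_radialPow_sub_rpow_le hp hp2 hκ _ _, norm_radialPow_half_sub_sq_le hp0.le hp2 hκ _ _⟩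

/-- For `1 < p ≤ 2` there exist constants `C₁, C₂ > 0`, depending only on `p` and `n`, such
that for every `κ ≥ 0` and all matrices `A, B`:
`|S(A) − S(B)|^{p'} ≤ C₁·|V(A) − V(B)|²` and `|V(A) − V(B)|² ≤ C₂·|A − B|^p`
where `p' = p/(p-1)`. -/
theorem tensor_relation_p_le_two (n : ℕ) (hn : 1 ≤ n) (p : ℝ) (hp : 1 < p) (hp2 : p ≤ 2) :
    ∃ C₁ C₂ : ℝ, 0 < C₁ ∧ 0 < C₂ ∧
      ∀ κ : ℝ, 0 ≤ κ → ∀ A B : Matrix (Fin n) (Fin n) ℝ,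
        fnorm (Smap p κ A - Smap p κ B) ^ (p / (p - 1))
            ≤ C₁ * fnorm (Vmap p κ A - Vmap p κ B) ^ 2
          ∧ fnorm (Vmap p κ A - Vmap p κ B) ^ 2 ≤ C₂ * fnorm (A - B) ^ p :=
  tensor_relation_p_le_two_general n p hp hp2
end

section
/- (Initial pressure) For every u₀ ∈ V there exists q ∈ Q such that B(q, ξ) = ⟨u₀, ξ⟩ for all ξ ∈ V_⊥; any two such solutions q, q' are equivalent (q ∼ q'); and every solution q satisfies sup over ξ ∈ V_⊥ with ξ ≠ 0 of B(q, ξ)/‖ξ‖ equals ‖Π_⊥ u₀‖ (with the convention that the supremum over the empty set is 0). -/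
open scoped RealInnerProductSpace

/-- The discretely divergence-free subspace
`V_div := {v ∈ V : B(q, v) = 0 for all q ∈ Q}`. -/
def Vdiv {Q V : Type*} [AddCommGroup Q] [Module ℝ Q]
    [NormedAddCommGroup V] [InnerProductSpace ℝ V]
    (B : Q →ₗ[ℝ] V →ₗ[ℝ] ℝ) : Submodule ℝ V where
  carrier := {v | ∀ q : Q, B q v = 0}
  add_mem' := by
    intro a b ha hb q
    simp [map_add, ha q, hb q]
  zero_mem' := by
    intro q
    simp
  smul_mem' := by
    intro c v hv q
    simp [map_smul, hv q]

/-!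
Let `R q` be the Riesz representative of `B q` (so `R = -∇`). Then `V_div` is exactly the
orthogonal complement of the range of `R`, hence in finite dimension `V_⊥ = range R`. The
projection `Π_⊥ u₀` is therefore `R q` for some `q`, and such a `q` solves the problem. For any
solution, `B(q, ξ) = ⟪Π_⊥ u₀, ξ⟫` on `V_⊥`, so the supremum is the dual norm of `Π_⊥ u₀ ∈ V_⊥`,
which is attained at `ξ = Π_⊥ u₀` by Cauchy–Schwarz.
-/

section

variable {V : Type*} [NormedAddCommGroup V] [InnerProductSpace ℝ V]

theorem Submodule.inner_orthogonalProjectionOnto_left_of_mem (K : Submodule ℝ V)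
    [K.HasOrthogonalProjection] (u : V) {ξ : V} (hξ : ξ ∈ K) :
    ⟪(K.orthogonalProjectionOnto u : V), ξ⟫ = ⟪u, ξ⟫ :=
  K.inner_orthogonalProjectionOnto_eq_of_mem_right ⟨ξ, hξ⟩ u

theorem sSup_inner_div_norm_eq_norm {W : Submodule ℝ V} {p : V} (hp : p ∈ W) :
    sSup {r : ℝ | ∃ ξ ∈ W, ξ ≠ 0 ∧ r = ⟪p, ξ⟫ / ‖ξ‖} = ‖p‖ := by
  rcases eq_or_ne p 0 with rfl | hp0
  · have hsub : {r : ℝ | ∃ ξ ∈ W, ξ ≠ 0 ∧ r = ⟪(0 : V), ξ⟫ / ‖ξ‖} ⊆ {0} := by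
      rintro _ ⟨ξ, -, -, rfl⟩
      simp
    rcases Set.subset_singleton_iff_eq.mp hsub with h | h <;> rw [h] <;> simp
  · refine IsGreatest.csSup_eq ⟨⟨p, hp, hp0, ?_⟩, ?_⟩
    · rw [real_inner_self_eq_norm_mul_norm, mul_div_cancel_right₀ _ (norm_ne_zero_iff.mpr hp0)]
    · rintro _ ⟨ξ, -, -, rfl⟩
      exact div_le_of_le_mul₀ (norm_nonneg _) (norm_nonneg _) (real_inner_le_norm p ξ)

end

section

variable {Q V : Type*} [AddCommGroup Q] [Module ℝ Q]
  [NormedAddCommGroup V] [InnerProductSpace ℝ V] [FiniteDimensional ℝ V]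

noncomputable def rieszRep (B : Q →ₗ[ℝ] V →ₗ[ℝ] ℝ) : Q →ₗ[ℝ] V where
  toFun q := (InnerProductSpace.toDual ℝ V).symm (B q).toContinuousLinearMap
  map_add' a b := by simp
  map_smul' c x := by simp

theorem inner_rieszRep (B : Q →ₗ[ℝ] V →ₗ[ℝ] ℝ) (q : Q) (v : V) : ⟪rieszRep B q, v⟫ = B q v := by
  simp [rieszRep, InnerProductSpace.toDual_symm_apply]

theorem Vdiv_eq_orthogonal_range_rieszRep (B : Q →ₗ[ℝ] V →ₗ[ℝ] ℝ) :
    Vdiv B = (LinearMap.range (rieszRep B))ᗮ := by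
  ext v
  simp only [Submodule.mem_orthogonal, LinearMap.mem_range, forall_exists_index,
    forall_apply_eq_imp_iff, inner_rieszRep]
  rfl

theorem orthogonal_Vdiv_eq_range_rieszRep (B : Q →ₗ[ℝ] V →ₗ[ℝ] ℝ) :
    (Vdiv B)ᗮ = LinearMap.range (rieszRep B) := by
  rw [Vdiv_eq_orthogonal_range_rieszRep, Submodule.orthogonal_orthogonal]

end

/-- Initial pressure: for every `u₀ ∈ V` there exists `q ∈ Q` with `B(q, ξ) = ⟪u₀, ξ⟫`
for all `ξ ∈ V_⊥ = (V_div)ᗮ`; any two solutions are equivalent (`q ∼ q'`, i.e.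
`B(q − q', ·)` vanishes on `V_⊥`); and every solution satisfies
`sup_{ξ ∈ V_⊥, ξ ≠ 0} B(q, ξ)/‖ξ‖ = ‖Π_⊥ u₀‖` (supremum of the empty set being `0`). -/
theorem initial_pressure {Q V : Type*} [AddCommGroup Q] [Module ℝ Q]
    [NormedAddCommGroup V] [InnerProductSpace ℝ V] [FiniteDimensional ℝ V]
    (B : Q →ₗ[ℝ] V →ₗ[ℝ] ℝ) (u₀ : V) :
    (∃ q : Q, ∀ ξ ∈ (Vdiv B)ᗮ, B q ξ = ⟪u₀, ξ⟫)
      ∧ (∀ q q' : Q, (∀ ξ ∈ (Vdiv B)ᗮ, B q ξ = ⟪u₀, ξ⟫) →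
          (∀ ξ ∈ (Vdiv B)ᗮ, B q' ξ = ⟪u₀, ξ⟫) →
          ∀ v ∈ (Vdiv B)ᗮ, B (q - q') v = 0)
      ∧ (∀ q : Q, (∀ ξ ∈ (Vdiv B)ᗮ, B q ξ = ⟪u₀, ξ⟫) →
          sSup {r : ℝ | ∃ ξ ∈ (Vdiv B)ᗮ, ξ ≠ 0 ∧ r = B q ξ / ‖ξ‖}
            = ‖(Submodule.orthogonalProjectionOnto (Vdiv B)ᗮ u₀ : V)‖) := by
  set W := (Vdiv B)ᗮ
  set p : V := (W.orthogonalProjectionOnto u₀ : V)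
  have hp_inner : ∀ ξ ∈ W, ⟪p, ξ⟫ = ⟪u₀, ξ⟫ := fun ξ hξ =>
    W.inner_orthogonalProjectionOnto_left_of_mem u₀ hξ
  refine ⟨?_, fun q q' hq hq' v hv => by simp [hq v hv, hq' v hv], fun q hq => ?_⟩
  · obtain ⟨q, hq⟩ : p ∈ LinearMap.range (rieszRep B) := by
      rw [← orthogonal_Vdiv_eq_range_rieszRep]
      exact Submodule.coe_mem _
    exact ⟨q, fun ξ hξ => by rw [← inner_rieszRep, hq, hp_inner ξ hξ]⟩
  · have hset : {r : ℝ | ∃ ξ ∈ W, ξ ≠ 0 ∧ r = B q ξ / ‖ξ‖}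
        = {r : ℝ | ∃ ξ ∈ W, ξ ≠ 0 ∧ r = ⟪p, ξ⟫ / ‖ξ‖} := by
      ext r
      refine exists_congr fun ξ => and_congr_right fun hξ => ?_
      rw [hq ξ hξ, hp_inner ξ hξ]
    rw [hset, sSup_inner_div_norm_eq_norm (Submodule.coe_mem _)]
end
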